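/- Let v ∈ [n]^n be a bracketing vector and k a split of v. Then v ⋖ v^k in the pointwise order on bracketing vectors, i.e. v < v^k and there is no bracketing vector strictly between them. Moreover every covering pair in the pointwise order on bracketing vectors arises this way: if v < w, the least index k with v_k < w_k is a split of v and v^k ≤ w. -/

import Mathlib

/-!
`v^k` is `v` with the single entry `v_k` raised to `v_{v_k+1}`, which exceeds `v_k` because
`v_{v_k+1} ≥ v_k + 1`. A bracketing `w` strictly between `v` and `v^k` agrees with `v` off `k`
and has `v_k < w_k < v_{v_k+1}`; then `k < v_k + 1 ≤ w_k`, so the bracketing condition for `w`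
gives `v_{v_k+1} = w_{v_k+1} ≤ w_k`, a contradiction.

Conversely, if `v ≤ w` first differ at `m`, the same condition for `w` at `m < v_m + 1 ≤ w_m`
gives `v_{v_m+1} ≤ w_{v_m+1} ≤ w_m`. This is `v^m ≤ w`, and for `i < m ≤ v_i = w_i` it
continues to `w_m ≤ w_i = v_i`, which is the split condition at `m`.
-/

/-- A bracketing vector: `i ≤ v i` and `i < j ≤ v i` implies `v j ≤ v i`. -/
def IsBracketing {n : ℕ} (v : Fin n → Fin n) : Prop :=
  (∀ i, i ≤ v i) ∧ ∀ i j : Fin n, i < j → j ≤ v i → v j ≤ v i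

/-- `k ∈ [n-1]` is a split of `v`: whenever `i < k ≤ v i` we have `v (v k + 1) ≤ v i`
(the split condition forces `v k + 1` to be a valid index). -/
structure IsSplit {n : ℕ} (v : Fin n → Fin n) (k : Fin n) : Prop where
  hk : (k : ℕ) + 1 < n
  hvk : (v k : ℕ) + 1 < n
  cond : ∀ i : Fin n, i < k → k ≤ v i → v ⟨(v k : ℕ) + 1, hvk⟩ ≤ v i

/-- The vector `v^k`: agrees with `v` except `v^k k = v (v k + 1)`. -/
def splitStep {n : ℕ} (v : Fin n → Fin n) (k : Fin n) (h : (v k : ℕ) + 1 < n) :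
    Fin n → Fin n := fun i => if i = k then v ⟨(v k : ℕ) + 1, h⟩ else v i

open Function

variable {n : ℕ}

lemma splitStep_eq_update (v : Fin n → Fin n) (k : Fin n) (h : (v k : ℕ) + 1 < n) :
    splitStep v k h = update v k (v ⟨(v k : ℕ) + 1, h⟩) := by
  funext i
  simp only [splitStep, update_apply]

lemma eq_update_of_le_of_le_update {ι : Type*} [DecidableEq ι] {π : ι → Type*}
    [∀ i, PartialOrder (π i)] {v w : ∀ i, π i} {k : ι} {a : π k}
    (hvw : v ≤ w) (hw : w ≤ update v k a) : w = update v k (w k) :=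
  eq_update_iff.2 ⟨rfl, fun j hj => le_antisymm ((le_update_iff.1 hw).2 j hj) (hvw j)⟩

namespace IsBracketing

variable {v w : Fin n → Fin n}

lemma lt_apply_add_one (hv : IsBracketing v) (k : Fin n) (h : (v k : ℕ) + 1 < n) :
    k < ⟨(v k : ℕ) + 1, h⟩ :=
  Fin.lt_def.2 (Nat.lt_add_one_of_le (hv.1 k))

lemma apply_lt_apply_add_one (hv : IsBracketing v) (k : Fin n) (h : (v k : ℕ) + 1 < n) :
    v k < v ⟨(v k : ℕ) + 1, h⟩ :=
  lt_of_lt_of_le (Fin.lt_def.2 (Nat.lt_add_one _)) (hv.1 _)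

lemma lt_splitStep (hv : IsBracketing v) (k : Fin n) (h : (v k : ℕ) + 1 < n) :
    v < splitStep v k h := by
  rw [splitStep_eq_update, lt_update_self_iff]
  exact hv.apply_lt_apply_add_one k h

lemma not_lt_of_lt_splitStep (hv : IsBracketing v) (hw : IsBracketing w) {k : Fin n}
    {h : (v k : ℕ) + 1 < n} (hvw : v < w) (hws : w < splitStep v k h) : False := by
  set k' : Fin n := ⟨(v k : ℕ) + 1, h⟩
  rw [splitStep_eq_update] at hws
  have hw_eq : w = update v k (w k) := eq_update_of_le_of_le_update hvw.le hws.le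
  have hw_k' : w k' = v k' := by
    rw [hw_eq, update_of_ne (hv.lt_apply_add_one k h).ne']
  rw [hw_eq, lt_update_self_iff] at hvw
  rw [hw_eq, update_lt_update_iff] at hws
  have hw_k'_le : w k' ≤ w k := hw.2 k k' (hv.lt_apply_add_one k h) (Fin.le_def.2 hvw)
  exact (hw_k' ▸ hw_k'_le).not_gt hws

lemma apply_apply_add_one_le (hv : IsBracketing v) (hw : IsBracketing w) (hvw : v ≤ w)
    {m : Fin n} (hm : v m < w m) (h : (v m : ℕ) + 1 < n) :
    v ⟨(v m : ℕ) + 1, h⟩ ≤ w m :=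
  (hvw _).trans <| hw.2 m _ (hv.lt_apply_add_one m h) (Fin.le_def.2 (Nat.succ_le_of_lt hm))

lemma isSplit_of_lt (hv : IsBracketing v) (hw : IsBracketing w) (hvw : v ≤ w) {m : Fin n}
    (hm : v m < w m) (hagree : ∀ j, j < m → v j = w j) : IsSplit v m :=
  have hvk : (v m : ℕ) + 1 < n := lt_of_le_of_lt (Nat.succ_le_of_lt hm) (w m).isLt
  { hk := lt_of_le_of_lt (Nat.succ_le_succ (hv.1 m)) hvk
    hvk
    cond := fun i him hmi => calc
      _ ≤ w m := hv.apply_apply_add_one_le hw hvw hm _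
      _ ≤ w i := hw.2 i m him (hagree i him ▸ hmi)
      _ = v i := (hagree i him).symm }

lemma splitStep_le (hv : IsBracketing v) (hw : IsBracketing w) (hvw : v ≤ w) {m : Fin n}
    (hm : v m < w m) (h : (v m : ℕ) + 1 < n) : splitStep v m h ≤ w := by
  rw [splitStep_eq_update, update_le_iff]
  exact ⟨hv.apply_apply_add_one_le hw hvw hm h, fun j _ => hvw j⟩

end IsBracketing

/-- If `k` is a split of the bracketing vector `v`, then `v ⋖ v^k` in the pointwise
order on bracketing vectors; moreover every cover arises this way: if `v < w`, the
least index `m` with `v m < w m` is a split of `v` with `v^m ≤ w`. -/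
theorem stmt15 (n : ℕ) (v : Fin n → Fin n) (k : Fin n)
    (hb : IsBracketing v) (hs : IsSplit v k) :
    v < splitStep v k hs.hvk ∧
    (∀ w : Fin n → Fin n, IsBracketing w → v < w → w < splitStep v k hs.hvk → False) ∧
    (∀ w : Fin n → Fin n, IsBracketing w → v < w →
      ∀ m : Fin n, v m < w m → (∀ j, j < m → v j = w j) →
        ∃ hm : IsSplit v m, splitStep v m hm.hvk ≤ w) :=
  ⟨hb.lt_splitStep k hs.hvk,
    fun _ hw hvw hws => hb.not_lt_of_lt_splitStep hw hvw hws,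
    fun _ hw hvw _ hm hagree =>
      ⟨hb.isSplit_of_lt hw hvw.le hm hagree, hb.splitStep_le hw hvw.le hm _⟩⟩
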